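/- arXiv:1211.0255 — 2 statements merged into one kernel-verified Lean document; each statement's English description precedes it below -/
import Mathlib

section
/- For the family f_s(z) = λz − (λ/2)(s + 1/s)z² + (λ/3)z³ with λ ∈ ℂ∖{0}, the n-th iterate evaluated at the critical point s satisfies: f_s^n(s) is a polynomial in s of degree 3^n with leading coefficient (λ/3)^{(3^{n-1}−1)/2} · (−λ/6)^{3^{n-1}} for all n ≥ 1. -/
/-!
Along the critical orbit, `f_s^n(s) = s · q_n(s)` for polynomials `q_n` with `q_0 = 1`: writing
`z = s q(s)`, the only non-polynomial term `(s + 1/s) z²` becomes `s (s² + 1) q(s)²`, so the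
factor `s` propagates. In the recursion for `q_{n+1}` the cubic term `(λ/3) X² q_n³` has strictly
the largest degree once `deg q_n > 0`, so degrees satisfy `d ↦ 3d + 2` and leading coefficients
`c ↦ (λ/3) c³`, starting from `q_1 = λ/2 - (λ/6) X²`.
-/

open Polynomial

theorem three_pow_succ_sub_one_div_two (m : ℕ) :
    (3 ^ (m + 1) - 1) / 2 = 1 + 3 * ((3 ^ m - 1) / 2) := by
  obtain ⟨k, hk⟩ : Odd (3 ^ m) := Odd.pow ⟨1, rfl⟩
  rw [pow_succ]
  omega

namespace CriticalOrbit

variable {K : Type*} [Field K]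

/-- The map `q_n ↦ q_{n+1}`, where `f_s^n(s) = s · q_n(s)`. -/
noncomputable def step (lam : K) (q : K[X]) : K[X] :=
  C lam * q - C (lam / 2) * (X ^ 2 + 1) * q ^ 2 + C (lam / 3) * X ^ 2 * q ^ 3

theorem semiconj_step (lam s : K) (hs : s ≠ 0) :
    Function.Semiconj (fun q : K[X] => s * q.eval s) (step lam)
      (fun z => lam * z - lam / 2 * (s + 1 / s) * z ^ 2 + lam / 3 * z ^ 3) := by
  intro q
  simp only [step, eval_add, eval_sub, eval_mul, eval_pow, eval_C, eval_X, eval_one]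
  field_simp

theorem iterate_eq_mul_eval (lam s : K) (hs : s ≠ 0) (n : ℕ) :
    (fun z => lam * z - lam / 2 * (s + 1 / s) * z ^ 2 + lam / 3 * z ^ 3)^[n] s
      = s * ((step lam)^[n] 1).eval s := by
  simpa using ((semiconj_step lam s hs).iterate_right n 1).symm

theorem natDegree_step_remainder_le (lam : K) (q : K[X]) :
    (C lam * q - C (lam / 2) * (X ^ 2 + 1) * q ^ 2).natDegree ≤ 2 * q.natDegree + 2 := by
  compute_degree
  omega

section CharZero

variable [CharZero K] {lam : K}

theorem step_one (lam : K) : step lam 1 = C (lam / 2) - C (lam / 6) * X ^ 2 := by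
  have h2 : C (lam / 2) + C (lam / 2) = C lam := by rw [← C_add, add_halves]
  have h3 : C (lam / 3) + C (lam / 6) = C (lam / 2) := by rw [← C_add]; congr 1; ring
  simp only [step, one_pow, mul_one]
  linear_combination -h2 + X ^ 2 * h3

theorem natDegree_step_leading (hlam : lam ≠ 0) {q : K[X]} (hq : q ≠ 0) :
    (C (lam / 3) * X ^ 2 * q ^ 3).natDegree = 3 * q.natDegree + 2 := by
  rw [mul_assoc, natDegree_C_mul (by simpa using hlam), natDegree_mul (pow_ne_zero 2 X_ne_zero)
    (pow_ne_zero 3 hq), natDegree_X_pow, natDegree_pow]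
  ring

theorem natDegree_step (hlam : lam ≠ 0) {q : K[X]} (hq : 0 < q.natDegree) :
    (step lam q).natDegree = 3 * q.natDegree + 2 := by
  have hq0 : q ≠ 0 := ne_zero_of_natDegree_gt hq
  rw [step, natDegree_add_eq_right_of_natDegree_lt] <;>
    grind [natDegree_step_leading, natDegree_step_remainder_le]

theorem leadingCoeff_step (hlam : lam ≠ 0) {q : K[X]} (hq : 0 < q.natDegree) :
    (step lam q).leadingCoeff = lam / 3 * q.leadingCoeff ^ 3 := by
  have hq0 : q ≠ 0 := ne_zero_of_natDegree_gt hq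
  rw [step, leadingCoeff_add_of_degree_lt, mul_assoc, leadingCoeff_C_mul_of_isUnit
    (by simpa using hlam), leadingCoeff_mul, leadingCoeff_X_pow, leadingCoeff_pow, one_mul]
  apply degree_lt_degree
  grind [natDegree_step_leading, natDegree_step_remainder_le]

theorem natDegree_leadingCoeff_iterate_step (hlam : lam ≠ 0) (m : ℕ) :
    ((step lam)^[m + 1] 1).natDegree = 3 ^ (m + 1) - 1 ∧
      ((step lam)^[m + 1] 1).leadingCoeff
        = (lam / 3) ^ ((3 ^ m - 1) / 2) * (-lam / 6) ^ 3 ^ m := by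
  induction m with
  | zero =>
    have hlam6 : lam / 6 ≠ 0 := by simpa using hlam
    rw [Function.iterate_one, step_one]
    constructor
    · compute_degree!
    · have hdeg : (C (lam / 2) - C (lam / 6) * X ^ 2).natDegree = 2 := by compute_degree!
      rw [leadingCoeff, hdeg]
      simp [coeff_X_pow, neg_div]
  | succ m ih =>
    obtain ⟨hdeg, hlead⟩ := ih
    have hpos : 0 < 3 ^ (m + 1) - 1 := by
      have := Nat.one_lt_pow m.succ_ne_zero (by norm_num : 1 < 3)
      omega
    rw [Function.iterate_succ_apply', natDegree_step hlam (hdeg ▸ hpos),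
      leadingCoeff_step hlam (hdeg ▸ hpos), hdeg, hlead, three_pow_succ_sub_one_div_two]
    constructor
    · have := Nat.one_le_pow (m + 1) 3 (by norm_num)
      rw [pow_succ 3 (m + 1)]
      omega
    · ring

end CharZero

end CriticalOrbit

open CriticalOrbit

/-- For `f_s(z) = λz − (λ/2)(s + 1/s)z² + (λ/3)z³` with `λ ≠ 0`, the `n`-th
iterate at the critical point `s` is (for `s ≠ 0`) given by a polynomial in `s` of degree
`3^n` whose leading coefficient is `(λ/3)^{(3^{n-1}−1)/2} · (−λ/6)^{3^{n-1}}`, for all `n ≥ 1`. -/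
theorem stmt_1 (lam : ℂ) (hlam : lam ≠ 0) (n : ℕ) (hn : 1 ≤ n) :
    ∃ p : Polynomial ℂ,
      p.natDegree = 3 ^ n ∧
      p.leadingCoeff = (lam / 3) ^ ((3 ^ (n - 1) - 1) / 2) * (-lam / 6) ^ (3 ^ (n - 1)) ∧
      ∀ s : ℂ, s ≠ 0 →
        (fun z => lam * z - lam / 2 * (s + 1 / s) * z ^ 2 + lam / 3 * z ^ 3)^[n] s
          = p.eval s := by
  obtain ⟨m, rfl⟩ : ∃ m, n = m + 1 := ⟨n - 1, by omega⟩
  obtain ⟨hdeg, hlead⟩ := natDegree_leadingCoeff_iterate_step hlam m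
  have hpow : 1 < 3 ^ (m + 1) := Nat.one_lt_pow m.succ_ne_zero (by norm_num)
  have hq : (step lam)^[m + 1] 1 ≠ 0 := ne_zero_of_natDegree_gt (n := 0) (by omega)
  refine ⟨X * (step lam)^[m + 1] 1, ?_, ?_, fun s hs => ?_⟩
  · rw [natDegree_X_mul hq, hdeg]
    omega
  · simpa [leadingCoeff_mul] using hlead
  · rw [iterate_eq_mul_eval lam s hs, eval_mul, eval_X]
end

section
/- Let f_t(z) = z^d + b_2(t)z^{d-2} + ... + b_d(t) with b_j ∈ ℂ[t], and a(t) ∈ ℂ[t]. Define G(t) = lim_{n→∞} d^{-n} log⁺|f_t^n(a(t))|. If deg_t f_t^n(a(t)) = m·d^n for all n ≥ 0 (with m ≥ 1), then G(t) = m·log|t| + O(1) as t → ∞, and the set M_a = {t ∈ ℂ : sup_n |f_t^n(a(t))| < ∞} is compact. -/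
/-!
Beyond the escape radius `4 · Σ ‖coeff‖` of a monic polynomial `g` of degree `d ≥ 2`, `g z` is
within a factor `2` of `z ^ d`; so `log ‖gⁿ z‖` equals `d · log ‖gⁿ⁻¹ z‖` up to `log 2` at each
step, and summing the geometric series of errors gives `G_g(z) = log ‖z‖ + O(1)` there.
For the family `f_t`, the escape radius of the fibre grows like a fixed power `‖t‖ ^ E`, while
`t ↦ f_tⁿ(a(t))` is a polynomial of degree `m dⁿ`. Choosing `n₀` with `m d^n₀ > E`, the point
`f_t^n₀(a(t))` escapes for large `‖t‖`, whence `G(t) = d^-n₀ (m d^n₀ log ‖t‖ + O(1))` and `M_a`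
is bounded. It is closed, being the set of `t` whose whole orbit stays within the (continuous)
escape radius of `f_t`.
-/

open Polynomial Filter Finset Bornology Topology

noncomputable def escapeRateApprox {α : Type*} [Norm α] (T : α → α) (d : ℝ) (z : α) (n : ℕ) : ℝ :=
  1 / d ^ n * Real.log (max 1 ‖T^[n] z‖)

theorem Filter.Tendsto.escapeRateApprox_iterate {α : Type*} [Norm α] {T : α → α} {d L : ℝ}
    (hd : d ≠ 0) {z : α} (hL : Tendsto (escapeRateApprox T d z) atTop (𝓝 L)) (k : ℕ) :
    Tendsto (escapeRateApprox T d (T^[k] z)) atTop (𝓝 (d ^ k * L)) := by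
  refine (((tendsto_add_atTop_iff_nat k).2 hL).const_mul (d ^ k)).congr fun n => ?_
  rw [escapeRateApprox, escapeRateApprox, ← Function.iterate_add_apply, pow_add]
  field_simp

namespace Polynomial

variable {𝕜 : Type*} [NormedField 𝕜]

noncomputable def normCoeffSum (p : 𝕜[X]) : ℝ :=
  ∑ i ∈ range (p.natDegree + 1), ‖p.coeff i‖

/- The factor `4` gives both `2 * normCoeffSum g ≤ ‖z‖`, so that `g z` is within a factor `2`
of `z ^ d`, and `4 ≤ ‖z‖`, so that `‖z‖ ^ d / 2 ≥ 2 * ‖z‖` once `d ≥ 2`. -/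
noncomputable def escapeRadius (g : 𝕜[X]) : ℝ :=
  4 * g.normCoeffSum

theorem norm_leadingCoeff_le_normCoeffSum (p : 𝕜[X]) : ‖p.leadingCoeff‖ ≤ p.normCoeffSum :=
  single_le_sum (f := fun i => ‖p.coeff i‖) (fun _ _ => norm_nonneg _) (self_mem_range_succ _)

theorem norm_eval_le_normCoeffSum_mul_pow (p : 𝕜[X]) {z : 𝕜} {E : ℕ} (hz : 1 ≤ ‖z‖)
    (hE : p.natDegree ≤ E) : ‖p.eval z‖ ≤ p.normCoeffSum * ‖z‖ ^ E := by
  rw [eval_eq_sum_range, normCoeffSum, sum_mul]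
  refine (norm_sum_le _ _).trans (sum_le_sum fun i hi => ?_)
  rw [norm_mul, norm_pow]
  exact mul_le_mul_of_nonneg_left
    (pow_le_pow_right₀ hz ((Nat.lt_succ_iff.mp (mem_range.mp hi)).trans hE)) (norm_nonneg _)

theorem norm_eval_sub_leadingCoeff_mul_pow_le (p : 𝕜[X]) {z : 𝕜} (hz : 1 ≤ ‖z‖)
    (h : 2 * p.normCoeffSum ≤ ‖p.leadingCoeff‖ * ‖z‖) :
    ‖p.eval z - p.leadingCoeff * z ^ p.natDegree‖ ≤ ‖p.leadingCoeff‖ / 2 * ‖z‖ ^ p.natDegree := by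
  set n := p.natDegree
  have hlower : p.eval z - p.leadingCoeff * z ^ n = ∑ i ∈ range n, p.coeff i * z ^ i := by
    rw [eval_eq_sum_range, sum_range_succ, coeff_natDegree, add_sub_cancel_right]
  have hterm : ‖z‖ * ∑ i ∈ range n, ‖p.coeff i * z ^ i‖ ≤ p.normCoeffSum * ‖z‖ ^ n := by
    rw [mul_sum, normCoeffSum, sum_mul]
    calc ∑ i ∈ range n, ‖z‖ * ‖p.coeff i * z ^ i‖
        ≤ ∑ i ∈ range n, ‖p.coeff i‖ * ‖z‖ ^ n := by
          refine sum_le_sum fun i hi => ?_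
          rw [norm_mul, norm_pow, mul_left_comm, ← pow_succ']
          exact mul_le_mul_of_nonneg_left (pow_le_pow_right₀ hz (mem_range.mp hi)) (norm_nonneg _)
      _ ≤ ∑ i ∈ range (n + 1), ‖p.coeff i‖ * ‖z‖ ^ n :=
          sum_le_sum_of_subset_of_nonneg (range_subset_range.mpr n.le_succ)
            fun _ _ _ => by positivity
  rw [hlower]
  refine (norm_sum_le _ _).trans (le_of_mul_le_mul_left ?_ (zero_lt_one.trans_le hz))
  calc ‖z‖ * ∑ i ∈ range n, ‖p.coeff i * z ^ i‖ ≤ p.normCoeffSum * ‖z‖ ^ n := hterm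
    _ ≤ ‖p.leadingCoeff‖ * ‖z‖ / 2 * ‖z‖ ^ n := by gcongr; linarith
    _ = ‖z‖ * (‖p.leadingCoeff‖ / 2 * ‖z‖ ^ n) := by ring

theorem norm_leadingCoeff_div_two_mul_pow_le_norm_eval (p : 𝕜[X]) {z : 𝕜} (hz : 1 ≤ ‖z‖)
    (h : 2 * p.normCoeffSum ≤ ‖p.leadingCoeff‖ * ‖z‖) :
    ‖p.leadingCoeff‖ / 2 * ‖z‖ ^ p.natDegree ≤ ‖p.eval z‖ := by
  have hdiff := p.norm_eval_sub_leadingCoeff_mul_pow_le hz h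
  have htri := norm_sub_norm_le (p.leadingCoeff * z ^ p.natDegree) (p.eval z)
  rw [norm_sub_rev, norm_mul, norm_pow] at htri
  linarith

namespace Monic

variable {g : 𝕜[X]} {z : 𝕜}

theorem one_le_normCoeffSum (hg : g.Monic) : 1 ≤ g.normCoeffSum := by
  simpa [hg.leadingCoeff] using g.norm_leadingCoeff_le_normCoeffSum

theorem four_le_escapeRadius (hg : g.Monic) : 4 ≤ g.escapeRadius := by
  unfold escapeRadius; linarith [hg.one_le_normCoeffSum]

theorem norm_eval_sub_pow_le (hg : g.Monic) (hz : g.escapeRadius ≤ ‖z‖) :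
    ‖g.eval z - z ^ g.natDegree‖ ≤ ‖z‖ ^ g.natDegree / 2 := by
  have h1 := hg.one_le_normCoeffSum
  unfold escapeRadius at hz
  have := g.norm_eval_sub_leadingCoeff_mul_pow_le (z := z) (by linarith)
    (by rw [hg.leadingCoeff, norm_one]; linarith)
  rwa [hg.leadingCoeff, one_mul, norm_one, one_div, inv_mul_eq_div] at this

theorem norm_pow_div_two_le_norm_eval (hg : g.Monic) (hz : g.escapeRadius ≤ ‖z‖) :
    ‖z‖ ^ g.natDegree / 2 ≤ ‖g.eval z‖ := by
  have hdiff := hg.norm_eval_sub_pow_le hz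
  have htri := norm_sub_norm_le (z ^ g.natDegree) (g.eval z)
  rw [norm_sub_rev, norm_pow] at htri
  linarith

theorem norm_eval_le_two_mul_norm_pow (hg : g.Monic) (hz : g.escapeRadius ≤ ‖z‖) :
    ‖g.eval z‖ ≤ 2 * ‖z‖ ^ g.natDegree := by
  have hdiff := hg.norm_eval_sub_pow_le hz
  have htri := norm_le_norm_add_norm_sub' (g.eval z) (z ^ g.natDegree)
  rw [norm_pow] at htri
  linarith [pow_nonneg (norm_nonneg z) g.natDegree]

theorem abs_log_norm_eval_sub_le (hg : g.Monic) (hz : g.escapeRadius ≤ ‖z‖) :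
    |Real.log ‖g.eval z‖ - g.natDegree * Real.log ‖z‖| ≤ Real.log 2 := by
  have hzpos : 0 < ‖z‖ := by linarith [hg.four_le_escapeRadius]
  have hpow : 0 < ‖z‖ ^ g.natDegree := by positivity
  have hlow := hg.norm_pow_div_two_le_norm_eval hz
  have l1 := Real.log_le_log (by positivity) hlow
  have l2 := Real.log_le_log ((half_pos hpow).trans_le hlow) (hg.norm_eval_le_two_mul_norm_pow hz)
  rw [Real.log_div hpow.ne' two_ne_zero, Real.log_pow] at l1
  rw [Real.log_mul two_ne_zero hpow.ne', Real.log_pow] at l2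
  rw [abs_le]
  constructor <;> linarith

theorem two_mul_norm_le_norm_eval (hg : g.Monic) (hd : 2 ≤ g.natDegree)
    (hz : g.escapeRadius ≤ ‖z‖) : 2 * ‖z‖ ≤ ‖g.eval z‖ := by
  have hz4 : 4 ≤ ‖z‖ := hg.four_le_escapeRadius.trans hz
  have hsq : ‖z‖ ^ 2 ≤ ‖z‖ ^ g.natDegree := pow_le_pow_right₀ (by linarith) hd
  nlinarith [hg.norm_pow_div_two_le_norm_eval hz]

theorem two_pow_mul_norm_le_norm_iterate (hg : g.Monic) (hd : 2 ≤ g.natDegree)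
    (hz : g.escapeRadius ≤ ‖z‖) (n : ℕ) : 2 ^ n * ‖z‖ ≤ ‖(fun w => g.eval w)^[n] z‖ := by
  induction n with
  | zero => simp
  | succ n ih =>
    have hesc : g.escapeRadius ≤ ‖(fun w => g.eval w)^[n] z‖ :=
      hz.trans ((le_mul_of_one_le_left (norm_nonneg _) (one_le_pow₀ one_le_two)).trans ih)
    rw [Function.iterate_succ_apply', pow_succ, mul_comm _ (2 : ℝ), mul_assoc]
    exact (mul_le_mul_of_nonneg_left ih zero_le_two).trans (hg.two_mul_norm_le_norm_eval hd hesc)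

theorem le_norm_iterate (hg : g.Monic) (hd : 2 ≤ g.natDegree) (hz : g.escapeRadius ≤ ‖z‖)
    (n : ℕ) : ‖z‖ ≤ ‖(fun w => g.eval w)^[n] z‖ :=
  (le_mul_of_one_le_left (norm_nonneg _) (one_le_pow₀ one_le_two)).trans
    (hg.two_pow_mul_norm_le_norm_iterate hd hz n)

theorem not_exists_bound_norm_iterate (hg : g.Monic) (hd : 2 ≤ g.natDegree) {n : ℕ}
    (hn : g.escapeRadius ≤ ‖(fun w => g.eval w)^[n] z‖) :
    ¬∃ B, ∀ k, ‖(fun w => g.eval w)^[k] z‖ ≤ B := by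
  rintro ⟨B, hB⟩
  have hpos : 0 < ‖(fun w => g.eval w)^[n] z‖ := by linarith [hg.four_le_escapeRadius]
  obtain ⟨k, hk⟩ := pow_unbounded_of_one_lt (B / ‖(fun w => g.eval w)^[n] z‖) one_lt_two
  have hgrow := hg.two_pow_mul_norm_le_norm_iterate hd hn k
  rw [← Function.iterate_add_apply] at hgrow
  rw [div_lt_iff₀ hpos] at hk
  linarith [hB (k + n)]

theorem exists_bound_norm_iterate_iff (hg : g.Monic) (hd : 2 ≤ g.natDegree) :
    (∃ B, ∀ n, ‖(fun w => g.eval w)^[n] z‖ ≤ B) ↔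
      ∀ n, ‖(fun w => g.eval w)^[n] z‖ ≤ g.escapeRadius :=
  ⟨fun h _ => not_lt.1 fun hn => hg.not_exists_bound_norm_iterate hd hn.le h, fun h => ⟨_, h⟩⟩

theorem abs_sub_log_norm_le_of_tendsto (hg : g.Monic) {d : ℕ} (hgd : g.natDegree = d)
    (hd : 2 ≤ d) (hz : g.escapeRadius ≤ ‖z‖) {L : ℝ}
    (hL : Tendsto (escapeRateApprox (fun w => g.eval w) d z) atTop (𝓝 L)) :
    |L - Real.log ‖z‖| ≤ Real.log 2 := by
  set u : ℕ → ℝ := fun n => Real.log ‖(fun w => g.eval w)^[n] z‖ with hu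
  have hesc (n : ℕ) : g.escapeRadius ≤ ‖(fun w => g.eval w)^[n] z‖ :=
    hz.trans (hg.le_norm_iterate (hgd ▸ hd) hz n)
  have happrox (n : ℕ) : escapeRateApprox (fun w => g.eval w) d z n = u n / (d : ℝ) ^ n := by
    rw [escapeRateApprox, max_eq_right (by linarith [hesc n, hg.four_le_escapeRadius]),
      one_div_mul_eq_div]
  have hstep (n : ℕ) : dist (u n / (d : ℝ) ^ n) (u (n + 1) / (d : ℝ) ^ (n + 1)) ≤
      Real.log 2 / 2 / 2 ^ n := by
    have hlog : |u (n + 1) - d * u n| ≤ Real.log 2 := by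
      have := hg.abs_log_norm_eval_sub_le (hesc n)
      rwa [← Function.iterate_succ_apply' (fun w => g.eval w), hgd] at this
    have hd0 : (0 : ℝ) < (d : ℝ) ^ (n + 1) := by positivity
    have hsplit : u n / (d : ℝ) ^ n - u (n + 1) / (d : ℝ) ^ (n + 1)
        = -(u (n + 1) - d * u n) / (d : ℝ) ^ (n + 1) := by
      field_simp
      ring
    rw [Real.dist_eq, hsplit, abs_div, abs_neg, abs_of_pos hd0]
    calc |u (n + 1) - d * u n| / (d : ℝ) ^ (n + 1)
        ≤ Real.log 2 / (d : ℝ) ^ (n + 1) := by gcongr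
      _ ≤ Real.log 2 / 2 ^ (n + 1) := by
          gcongr
          exact_mod_cast hd
      _ = Real.log 2 / 2 / 2 ^ n := by ring
  simpa [hu, dist_comm, Real.dist_eq] using
    dist_le_of_le_geometric_two_of_tendsto₀ hstep (hL.congr happrox)

end Monic

theorem eventually_norm_leadingCoeff_div_two_mul_pow_le_norm_eval {P : 𝕜[X]} (hP : P ≠ 0) :
    ∀ᶠ t in cobounded 𝕜, ‖P.leadingCoeff‖ / 2 * ‖t‖ ^ P.natDegree ≤ ‖P.eval t‖ := by
  have hc : 0 < ‖P.leadingCoeff‖ := norm_pos_iff.2 (leadingCoeff_ne_zero.2 hP)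
  filter_upwards [eventually_cobounded_le_norm 1,
    eventually_cobounded_le_norm (2 * P.normCoeffSum / ‖P.leadingCoeff‖)] with t h1 h2
  rw [div_le_iff₀ hc, mul_comm ‖t‖] at h2
  exact P.norm_leadingCoeff_div_two_mul_pow_le_norm_eval h1 h2

theorem eventually_mul_pow_le_norm_eval {P : 𝕜[X]} (hP : P ≠ 0) {E : ℕ} (hE : E < P.natDegree)
    (A : ℝ) : ∀ᶠ t in cobounded 𝕜, A * ‖t‖ ^ E ≤ ‖P.eval t‖ := by
  have hc : 0 < ‖P.leadingCoeff‖ := norm_pos_iff.2 (leadingCoeff_ne_zero.2 hP)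
  filter_upwards [eventually_norm_leadingCoeff_div_two_mul_pow_le_norm_eval hP,
    eventually_cobounded_le_norm 1, eventually_cobounded_le_norm (2 * A / ‖P.leadingCoeff‖)]
    with t hlow h1 hA
  rw [div_le_iff₀ hc] at hA
  calc A * ‖t‖ ^ E ≤ ‖P.leadingCoeff‖ / 2 * ‖t‖ * ‖t‖ ^ E := by gcongr; linarith
    _ = ‖P.leadingCoeff‖ / 2 * ‖t‖ ^ (E + 1) := by ring
    _ ≤ ‖P.leadingCoeff‖ / 2 * ‖t‖ ^ P.natDegree := by gcongr; exact hE
    _ ≤ ‖P.eval t‖ := hlow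

theorem exists_abs_log_norm_eval_sub_le {P : 𝕜[X]} (hP : P ≠ 0) : ∃ K, ∀ᶠ t in cobounded 𝕜,
    |Real.log ‖P.eval t‖ - P.natDegree * Real.log ‖t‖| ≤ K := by
  have hlc : 0 < ‖P.leadingCoeff‖ := norm_pos_iff.2 (leadingCoeff_ne_zero.2 hP)
  have hH : 0 < P.normCoeffSum := hlc.trans_le P.norm_leadingCoeff_le_normCoeffSum
  set c := ‖P.leadingCoeff‖ / 2
  have hc : 0 < c := half_pos hlc
  refine ⟨|Real.log c| + |Real.log P.normCoeffSum|, ?_⟩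
  filter_upwards [eventually_norm_leadingCoeff_div_two_mul_pow_le_norm_eval hP,
    eventually_cobounded_le_norm 1] with t hlow h1
  have hpow : 0 < ‖t‖ ^ P.natDegree := by positivity
  have l1 := Real.log_le_log (by positivity) hlow
  have l2 := Real.log_le_log ((mul_pos hc hpow).trans_le hlow)
    (P.norm_eval_le_normCoeffSum_mul_pow h1 le_rfl)
  rw [Real.log_mul hc.ne' hpow.ne', Real.log_pow] at l1
  rw [Real.log_mul hH.ne' hpow.ne', Real.log_pow] at l2
  rw [abs_le]
  constructor <;>
    linarith [neg_abs_le (Real.log c), le_abs_self (Real.log P.normCoeffSum),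
      abs_nonneg (Real.log c), abs_nonneg (Real.log P.normCoeffSum)]

section Family

variable (f : 𝕜[X][X])

theorem eval_iterate_eval (n : ℕ) (a : 𝕜[X]) (t : 𝕜) :
    ((fun p => f.eval p)^[n] a).eval t =
      (fun z => (f.map (evalRingHom t)).eval z)^[n] (a.eval t) := by
  have h : Function.Semiconj (evalRingHom t) (fun p => f.eval p)
      (fun z => (f.map (evalRingHom t)).eval z) := fun p => (eval_map_apply ..).symm
  exact h.iterate_right n a

variable {f}

theorem Monic.escapeRadius_map_evalRingHom (hf : f.Monic) (t : 𝕜) :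
    (f.map (evalRingHom t)).escapeRadius =
      4 * ∑ i ∈ range (f.natDegree + 1), ‖(f.coeff i).eval t‖ := by
  simp [escapeRadius, normCoeffSum, hf.natDegree_map]

theorem Monic.continuous_escapeRadius_map_evalRingHom (hf : f.Monic) :
    Continuous fun t : 𝕜 => (f.map (evalRingHom t)).escapeRadius := by
  simp_rw [hf.escapeRadius_map_evalRingHom]
  exact continuous_const.mul (continuous_finsetSum _ fun i _ => (Polynomial.continuous _).norm)

theorem Monic.exists_escapeRadius_map_evalRingHom_le (hf : f.Monic) :
    ∃ (A : ℝ) (E : ℕ), ∀ t : 𝕜, 1 ≤ ‖t‖ → (f.map (evalRingHom t)).escapeRadius ≤ A * ‖t‖ ^ E := by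
  refine ⟨4 * ∑ i ∈ range (f.natDegree + 1), (f.coeff i).normCoeffSum,
    (range (f.natDegree + 1)).sup fun i => (f.coeff i).natDegree, fun t ht => ?_⟩
  rw [hf.escapeRadius_map_evalRingHom, mul_assoc, sum_mul]
  gcongr with i hi
  exact norm_eval_le_normCoeffSum_mul_pow _ ht (le_sup (f := fun i => (f.coeff i).natDegree) hi)

theorem Monic.exists_eventually_escapeRadius_map_evalRingHom_le (hf : f.Monic) :
    ∃ E : ℕ, ∀ P : 𝕜[X], E < P.natDegree →
      ∀ᶠ t in cobounded 𝕜, (f.map (evalRingHom t)).escapeRadius ≤ ‖P.eval t‖ := by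
  obtain ⟨A, E, hA⟩ := hf.exists_escapeRadius_map_evalRingHom_le
  refine ⟨E, fun P hP => ?_⟩
  filter_upwards [eventually_mul_pow_le_norm_eval (ne_zero_of_natDegree_gt hP) hP A,
    eventually_cobounded_le_norm 1] with t hPt ht
  exact (hA t ht).trans hPt

theorem Monic.exists_eventually_abs_sub_mul_log_norm_le (hf : f.Monic) {d : ℕ}
    (hfd : f.natDegree = d) (hd : 2 ≤ d) {a : 𝕜[X]} {G : 𝕜 → ℝ}
    (hG : ∀ t, Tendsto (escapeRateApprox (fun z => (f.map (evalRingHom t)).eval z) d (a.eval t))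
      atTop (𝓝 (G t)))
    {n₀ m : ℕ} (hm : ((fun p => f.eval p)^[n₀] a).natDegree = m * d ^ n₀)
    (hP : (fun p => f.eval p)^[n₀] a ≠ 0)
    (hesc : ∀ᶠ t in cobounded 𝕜,
      (f.map (evalRingHom t)).escapeRadius ≤ ‖((fun p => f.eval p)^[n₀] a).eval t‖) :
    ∃ C, ∀ᶠ t in cobounded 𝕜, |G t - m * Real.log ‖t‖| ≤ C := by
  obtain ⟨K, hK⟩ := exists_abs_log_norm_eval_sub_le hP
  rw [hm] at hK
  refine ⟨(Real.log 2 + K) / d ^ n₀, ?_⟩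
  filter_upwards [hesc, hK] with t hesc_t hK_t
  rw [eval_iterate_eval] at hesc_t hK_t
  set g := f.map (evalRingHom t)
  set z := (fun w => g.eval w)^[n₀] (a.eval t)
  have hgreen : |d ^ n₀ * G t - Real.log ‖z‖| ≤ Real.log 2 :=
    (hf.map _).abs_sub_log_norm_le_of_tendsto ((hf.natDegree_map _).trans hfd) hd hesc_t
      ((hG t).escapeRateApprox_iterate (by positivity) n₀)
  have hdn : (0 : ℝ) < (d : ℝ) ^ n₀ := by positivity
  rw [le_div_iff₀ hdn, ← abs_of_pos hdn, ← abs_mul]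
  push_cast at hK_t
  calc |(G t - m * Real.log ‖t‖) * d ^ n₀|
      = |(d ^ n₀ * G t - Real.log ‖z‖) + (Real.log ‖z‖ - m * d ^ n₀ * Real.log ‖t‖)| := by
        ring_nf
    _ ≤ Real.log 2 + K := (abs_add_le _ _).trans (add_le_add hgreen hK_t)

theorem Monic.isClosed_setOf_exists_bound (hf : f.Monic) (hd : 2 ≤ f.natDegree) (a : 𝕜[X]) :
    IsClosed {t : 𝕜 | ∃ B : ℝ, ∀ n : ℕ, ‖((fun p => f.eval p)^[n] a).eval t‖ ≤ B} := by
  have hM : {t : 𝕜 | ∃ B : ℝ, ∀ n : ℕ, ‖((fun p => f.eval p)^[n] a).eval t‖ ≤ B} =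
      ⋂ n, {t | ‖((fun p => f.eval p)^[n] a).eval t‖ ≤ (f.map (evalRingHom t)).escapeRadius} := by
    ext t
    simp only [Set.mem_ofPred_eq, Set.mem_iInter, eval_iterate_eval]
    exact (hf.map (evalRingHom t)).exists_bound_norm_iterate_iff
      (hf.natDegree_map (evalRingHom t) ▸ hd)
  rw [hM]
  exact isClosed_iInter fun n => isClosed_le (Polynomial.continuous _).norm
    hf.continuous_escapeRadius_map_evalRingHom

theorem Monic.isBounded_setOf_exists_bound (hf : f.Monic) (hd : 2 ≤ f.natDegree) {a : 𝕜[X]}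
    {n₀ : ℕ} (hesc : ∀ᶠ t in cobounded 𝕜,
      (f.map (evalRingHom t)).escapeRadius ≤ ‖((fun p => f.eval p)^[n₀] a).eval t‖) :
    IsBounded {t : 𝕜 | ∃ B : ℝ, ∀ n : ℕ, ‖((fun p => f.eval p)^[n] a).eval t‖ ≤ B} := by
  rw [isBounded_def]
  filter_upwards [hesc] with t hesc_t
  rw [eval_iterate_eval] at hesc_t
  simp only [Set.mem_compl_iff, Set.mem_ofPred_eq, eval_iterate_eval]
  exact (hf.map (evalRingHom t)).not_exists_bound_norm_iterate
    (hf.natDegree_map (evalRingHom t) ▸ hd) hesc_t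

end Family

end Polynomial

theorem stmt_17_general (d : ℕ) (hd : 2 ≤ d) (f : Polynomial (Polynomial ℂ))
    (hmonic : f.Monic) (hdeg : f.natDegree = d)
    (a : Polynomial ℂ) (m : ℕ) (hm : 1 ≤ m)
    (horb : ∀ n : ℕ, ((fun p => Polynomial.eval p f)^[n] a).natDegree = m * d ^ n)
    (G : ℂ → ℝ)
    (hG : ∀ t : ℂ, Tendsto
      (fun n : ℕ => (1 / (d : ℝ) ^ n) *
        Real.log (max 1 ‖((fun p => Polynomial.eval p f)^[n] a).eval t‖))
      atTop (nhds (G t))) :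
    (∃ C R : ℝ, ∀ t : ℂ, R ≤ ‖t‖ →
        |G t - (m : ℝ) * Real.log ‖t‖| ≤ C) ∧
    IsCompact {t : ℂ | ∃ B : ℝ, ∀ n : ℕ,
        ‖((fun p => Polynomial.eval p f)^[n] a).eval t‖ ≤ B} := by
  obtain ⟨E, hE⟩ := hmonic.exists_eventually_escapeRadius_map_evalRingHom_le
  obtain ⟨n₀, hn₀⟩ : ∃ n, E < m * d ^ n :=
    ⟨E, (Nat.lt_pow_self (by omega)).trans_le (Nat.le_mul_of_pos_left _ hm)⟩
  have hPE : E < ((fun p => f.eval p)^[n₀] a).natDegree := (horb n₀).symm ▸ hn₀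
  have hesc := hE _ hPE
  have hG' (t : ℂ) : Tendsto (escapeRateApprox (fun z => (f.map (evalRingHom t)).eval z) d
      (a.eval t)) atTop (𝓝 (G t)) :=
    (hG t).congr fun n => by rw [escapeRateApprox, eval_iterate_eval]
  refine ⟨?_, Metric.isCompact_of_isClosed_isBounded (hmonic.isClosed_setOf_exists_bound
    (hdeg ▸ hd) a) (hmonic.isBounded_setOf_exists_bound (hdeg ▸ hd) hesc)⟩
  obtain ⟨C, hC⟩ := hmonic.exists_eventually_abs_sub_mul_log_norm_le hdeg hd hG' (horb n₀)
    (ne_zero_of_natDegree_gt hPE) hesc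
  obtain ⟨R, -, hR⟩ := hasBasis_cobounded_norm.eventually_iff.1 hC
  exact ⟨C, R, fun t ht => hR ht⟩

/-- For a monic centered family `f_t(z) = z^d + b₂(t)z^{d-2} + ⋯ + b_d(t)`
with polynomial coefficients and a marked point `a(t) ∈ ℂ[t]` whose iterates satisfy
`deg_t f_t^n(a(t)) = m·d^n` for all `n ≥ 0` (`m ≥ 1`), the escape rate
`G(t) = lim_n d^{-n} log⁺|f_t^n(a(t))|` satisfies `G(t) = m·log|t| + O(1)` as `t → ∞`,
and the boundedness locus `M_a = {t : sup_n |f_t^n(a(t))| < ∞}` is compact. -/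
theorem stmt_17 (d : ℕ) (hd : 2 ≤ d) (f : Polynomial (Polynomial ℂ))
    (hmonic : f.Monic) (hdeg : f.natDegree = d) (hcentered : f.coeff (d - 1) = 0)
    (a : Polynomial ℂ) (m : ℕ) (hm : 1 ≤ m)
    (horb : ∀ n : ℕ, ((fun p => Polynomial.eval p f)^[n] a).natDegree = m * d ^ n)
    (G : ℂ → ℝ)
    (hG : ∀ t : ℂ, Tendsto
      (fun n : ℕ => (1 / (d : ℝ) ^ n) *
        Real.log (max 1 ‖((fun p => Polynomial.eval p f)^[n] a).eval t‖))
      atTop (nhds (G t))) :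
    (∃ C R : ℝ, ∀ t : ℂ, R ≤ ‖t‖ →
        |G t - (m : ℝ) * Real.log ‖t‖| ≤ C) ∧
    IsCompact {t : ℂ | ∃ B : ℝ, ∀ n : ℕ,
        ‖((fun p => Polynomial.eval p f)^[n] a).eval t‖ ≤ B} :=
  stmt_17_general d hd f hmonic hdeg a m hm horb G hG
end
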